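/- arXiv:1206.4436 — 5 statements merged into one kernel-verified Lean document; each statement's English description precedes it below -/
import Mathlib

section
/- Let n ≥ 1 and let φ : ℤ^n → ℤ/(2n+1) be the homomorphism determined by φ(e_i) = i (mod 2n+1) for i = 1, ..., n. If x, y ∈ ℤ^n satisfy |x - y|_M ≤ 1 and φ(x) = φ(y), then x = y; moreover, for every x ∈ ℤ^n there exists y with |x - y|_M ≤ 1 and φ(y) = 0. Consequently ker φ is a perfect Lee code of radius 1 in ℤ^n. -/
/-!
`φ` is the reduction mod `2n+1` of the integer form `leeForm x = ∑ (i+1) x_i`. The Lee ball of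
radius 1 about the origin consists of `0` and the `±e_j`, on which `leeForm` takes the values
`0, ±1, …, ±n`, each exactly once; and these are a complete set of residues mod `2n+1`. So `φ`
maps the ball bijectively onto `ℤ/(2n+1)`, and by additivity the same holds for the ball about
any `x`: exactly one of its points lies in `ker φ`.
-/

/-- `T ⊆ ℤ^n` is a perfect Lee code of radius 1. -/
def PerfectLeeCode (n : ℕ) (T : Set (Fin n → ℤ)) : Prop :=
  ∀ x : Fin n → ℤ, ∃! t, t ∈ T ∧ ∑ i, |x i - t i| ≤ 1

open Finset

section SumAbsLeOne

variable {ι : Type*} [Fintype ι] [DecidableEq ι]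

theorem sum_abs_single (j : ι) (s : ℤ) : ∑ i, |Pi.single j s i| = |s| := by
  simp [Pi.single_apply, apply_ite]

theorem eq_zero_or_eq_single_of_sum_abs_le_one {d : ι → ℤ} (h : ∑ i, |d i| ≤ 1) :
    d = 0 ∨ ∃ j s, |s| = 1 ∧ d = Pi.single j s := by
  by_cases hd : d = 0
  · exact .inl hd
  obtain ⟨j, hj⟩ := Function.ne_iff.mp hd
  have hsplit := add_sum_erase univ (fun i => |d i|) (mem_univ j)
  have hj1 : 1 ≤ |d j| := Int.one_le_abs hj
  have hrest : ∑ i ∈ univ.erase j, |d i| = 0 := by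
    have := sum_nonneg fun i (_ : i ∈ univ.erase j) => abs_nonneg (d i)
    omega
  refine .inr ⟨j, d j, by omega, funext fun i => ?_⟩
  rcases eq_or_ne i j with rfl | hij
  · simp
  · rw [Pi.single_eq_of_ne hij]
    exact abs_eq_zero.mp <| (sum_eq_zero_iff_of_nonneg fun k _ => abs_nonneg (d k)).mp hrest i
      (mem_erase.mpr ⟨hij, mem_univ i⟩)

end SumAbsLeOne

theorem valMinAbs_intCast_of_abs_le {n : ℕ} {a : ℤ} (ha : |a| ≤ n) :
    (a : ZMod (2 * n + 1)).valMinAbs = a := by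
  rw [ZMod.valMinAbs_spec]
  refine ⟨rfl, ?_, ?_⟩ <;> push_cast <;> cases abs_le.mp ha <;> omega

theorem eq_of_intCast_eq_of_abs_le {n : ℕ} {a b : ℤ} (ha : |a| ≤ n) (hb : |b| ≤ n)
    (h : (a : ZMod (2 * n + 1)) = b) : a = b := by
  rw [← valMinAbs_intCast_of_abs_le ha, ← valMinAbs_intCast_of_abs_le hb, h]

theorem exists_abs_le_intCast_eq {n : ℕ} (c : ZMod (2 * n + 1)) :
    ∃ a : ℤ, |a| ≤ n ∧ (a : ZMod (2 * n + 1)) = c := by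
  refine ⟨c.valMinAbs, ?_, ZMod.coe_valMinAbs c⟩
  have := ZMod.natAbs_valMinAbs_le c
  rw [Int.abs_eq_natAbs]
  omega

def leeForm (n : ℕ) (x : Fin n → ℤ) : ℤ := ∑ i, x i * ((i : ℤ) + 1)

section LeeForm

variable {n : ℕ}

@[simp]
theorem leeForm_zero : leeForm n 0 = 0 := by
  simp [leeForm]

theorem leeForm_sub (x y : Fin n → ℤ) : leeForm n (x - y) = leeForm n x - leeForm n y := by
  simp only [leeForm, Pi.sub_apply, sub_mul, sum_sub_distrib]

theorem leeForm_single (j : Fin n) (s : ℤ) : leeForm n (Pi.single j s) = s * (j + 1) := by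
  rw [leeForm, sum_eq_single j] <;> simp +contextual

theorem abs_leeForm_le {d : Fin n → ℤ} (hd : ∑ i, |d i| ≤ 1) : |leeForm n d| ≤ n := by
  rcases eq_zero_or_eq_single_of_sum_abs_le_one hd with rfl | ⟨j, s, hs, rfl⟩
  · simp
  · rw [leeForm_single, abs_mul, hs, one_mul, abs_of_pos (by positivity)]
    omega

theorem leeForm_injOn : Set.InjOn (leeForm n) {d | ∑ i, |d i| ≤ 1} := by
  have hne (j : Fin n) (s : ℤ) (hs : |s| = 1) : leeForm n (Pi.single j s) ≠ leeForm n 0 := by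
    rw [leeForm_single, leeForm_zero]
    exact mul_ne_zero (by rintro rfl; simp at hs) (by positivity)
  intro d hd e he h
  rcases eq_zero_or_eq_single_of_sum_abs_le_one hd with rfl | ⟨j, s, hs, rfl⟩ <;>
    rcases eq_zero_or_eq_single_of_sum_abs_le_one he with rfl | ⟨j', s', hs', rfl⟩
  · rfl
  · exact absurd h.symm (hne j' s' hs')
  · exact absurd h (hne j s hs)
  · rw [leeForm_single, leeForm_single] at h
    have hj : j = j' := by
      have := congrArg abs h
      rw [abs_mul, abs_mul, hs, hs', abs_of_pos (by positivity), abs_of_pos (by positivity)] at this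
      omega
    subst hj
    rw [mul_right_cancel₀ (by positivity) h]

theorem exists_leeForm_eq {a : ℤ} (ha : |a| ≤ n) :
    ∃ d : Fin n → ℤ, ∑ i, |d i| ≤ 1 ∧ leeForm n d = a := by
  rcases eq_or_ne a 0 with rfl | ha0
  · exact ⟨0, by simp, leeForm_zero⟩
  have hpos : 0 < |a| := abs_pos.mpr ha0
  refine ⟨Pi.single ⟨(|a| - 1).toNat, by omega⟩ a.sign, ?_, ?_⟩
  · rw [sum_abs_single, Int.abs_sign_of_ne_zero ha0]
  · rw [leeForm_single, Fin.val_mk, Int.toNat_of_nonneg (by omega), sub_add_cancel,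
      Int.sign_mul_abs]

end LeeForm

theorem intCast_leeForm_injOn {n : ℕ} :
    Set.InjOn (fun d => (leeForm n d : ZMod (2 * n + 1))) {d | ∑ i, |d i| ≤ 1} :=
  fun _ hd _ he h =>
    leeForm_injOn hd he (eq_of_intCast_eq_of_abs_le (abs_leeForm_le hd) (abs_leeForm_le he) h)

theorem exists_intCast_leeForm_eq {n : ℕ} (c : ZMod (2 * n + 1)) :
    ∃ d : Fin n → ℤ, ∑ i, |d i| ≤ 1 ∧ (leeForm n d : ZMod (2 * n + 1)) = c := by
  obtain ⟨a, ha, rfl⟩ := exists_abs_le_intCast_eq c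
  obtain ⟨d, hd, rfl⟩ := exists_leeForm_eq ha
  exact ⟨d, hd, rfl⟩

theorem molnar_code_general (n : ℕ) :
    let φ : (Fin n → ℤ) → ZMod (2 * n + 1) :=
      fun x => ∑ i, (x i : ZMod (2 * n + 1)) * ((((i : ℕ) + 1 : ℕ)) : ZMod (2 * n + 1))
    (∀ x y : Fin n → ℤ, ∑ i, |x i - y i| ≤ 1 → φ x = φ y → x = y) ∧
    (∀ x : Fin n → ℤ, ∃ y : Fin n → ℤ, ∑ i, |x i - y i| ≤ 1 ∧ φ y = 0) ∧
    PerfectLeeCode n {x | φ x = 0} := by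
  intro φ
  have hφ (x : Fin n → ℤ) : φ x = leeForm n x := by simp [φ, leeForm]
  have hφ_sub (x y : Fin n → ℤ) : φ (x - y) = φ x - φ y := by
    simp only [hφ, leeForm_sub, Int.cast_sub]
  have near (x : Fin n → ℤ) : ∃ y : Fin n → ℤ, ∑ i, |x i - y i| ≤ 1 ∧ φ y = 0 := by
    obtain ⟨d, hd, hφd⟩ := exists_intCast_leeForm_eq (φ x)
    refine ⟨x - d, by simpa using hd, ?_⟩
    rw [hφ_sub, hφ d, hφd, sub_self]
  refine ⟨fun x y hxy h => ?_, near, fun x => ?_⟩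
  · refine sub_eq_zero.mp (intCast_leeForm_injOn (x₁ := x - y) hxy (by simp) ?_)
    simp only [← hφ, hφ_sub, h, sub_self, leeForm_zero, Int.cast_zero]
  · obtain ⟨y, hxy, hy⟩ := near x
    refine ⟨y, ⟨hy, hxy⟩, fun t ⟨(ht : φ t = 0), hxt⟩ => sub_right_injective (b := x) ?_⟩
    exact intCast_leeForm_injOn (x₁ := x - t) (x₂ := x - y) hxt hxy
      (by simp only [← hφ, hφ_sub, ht, hy])

/-- For the homomorphism `φ : ℤ^n → ℤ/(2n+1)` with `φ(e_i) = i` (1-based),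
words at Manhattan distance ≤ 1 with equal `φ`-values coincide, every word is at
distance ≤ 1 from `ker φ`, and hence `ker φ` is a perfect Lee code of radius 1. -/
theorem molnar_code (n : ℕ) (hn : 1 ≤ n) :
    let φ : (Fin n → ℤ) → ZMod (2 * n + 1) :=
      fun x => ∑ i, (x i : ZMod (2 * n + 1)) * ((((i : ℕ) + 1 : ℕ)) : ZMod (2 * n + 1))
    (∀ x y : Fin n → ℤ, ∑ i, |x i - y i| ≤ 1 → φ x = φ y → x = y) ∧
    (∀ x : Fin n → ℤ, ∃ y : Fin n → ℤ, ∑ i, |x i - y i| ≤ 1 ∧ φ y = 0) ∧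
    PerfectLeeCode n {x | φ x = 0} :=
  molnar_code_general n
end

section
/- Let φ : ℤ^n → ℤ/(2n+1) be a group homomorphism such that the elements φ(e_1), ..., φ(e_n) are nonzero, pairwise distinct, and satisfy φ(e_i) ≠ -φ(e_j) for all 1 ≤ i < j ≤ n. Then ker φ is a perfect Lee code of radius 1 in ℤ^n, i.e. every x ∈ ℤ^n is at Manhattan distance at most 1 from exactly one element of ker φ. -/
/-- If `φ : ℤ^n → ℤ/(2n+1)` sends the standard basis vectors to nonzero, pairwise
distinct elements no one of which is the negative of another, then `ker φ` is a
perfect Lee code of radius 1. -/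
theorem kernel_perfect_code (n : ℕ) (φ : (Fin n → ℤ) →+ ZMod (2 * n + 1))
    (h0 : ∀ i : Fin n, φ (Pi.single i 1) ≠ 0)
    (hinj : ∀ i j : Fin n, φ (Pi.single i 1) = φ (Pi.single j 1) → i = j)
    (hneg : ∀ i j : Fin n, i ≠ j → φ (Pi.single i 1) ≠ -φ (Pi.single j 1)) :
    PerfectLeeCode n {x | φ x = 0} := by
  haveI : NeZero (2 * n + 1) := ⟨by omega⟩
  set E := (Fin n ⊕ Fin n ⊕ Unit) with hE
  let vec : E → (Fin n → ℤ) := Sum.elim (fun i => Pi.single i 1)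
    (Sum.elim (fun i => Pi.single i (-1)) (fun _ => 0))
  have key : ∀ i, φ (Pi.single i (-1) : Fin n → ℤ) = - φ (Pi.single i 1) := by
    intro i
    rw [← map_neg]
    congr 1
    funext j
    by_cases h : j = i <;> simp [Pi.single_apply, h]
  have two_unit : ∀ a : ZMod (2 * n + 1), a = -a → a = 0 := by
    intro a ha
    have h2 : (2 : ZMod (2 * n + 1)) * a = 0 := by
      have := eq_neg_iff_add_eq_zero.mp ha
      linear_combination this
    have hu : IsUnit (2 : ZMod (2 * n + 1)) := by
      have : ((2 : ℕ) : ZMod (2 * n + 1)) = (2 : ZMod (2 * n + 1)) := by norm_cast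
      rw [← this, ZMod.isUnit_iff_coprime]
      exact Nat.coprime_two_left.mpr ⟨n, rfl⟩
    exact (hu.mul_right_eq_zero).mp h2
  have classify : ∀ d : Fin n → ℤ, ∑ i, |d i| ≤ 1 → ∃ e : E, d = vec e := by
    intro d hd
    by_cases h : d = 0
    · exact ⟨Sum.inr (Sum.inr ()), by simp [vec, h]⟩
    · obtain ⟨i, hi⟩ := Function.ne_iff.mp h
      have hle : |d i| ≤ 1 :=
        le_trans (Finset.single_le_sum (fun j _ => abs_nonneg (d j)) (Finset.mem_univ i)) hd
      have hz : ∀ j, j ≠ i → d j = 0 := by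
        intro j hj
        by_contra hdj
        have h2 : |d i| + |d j| ≤ ∑ k, |d k| := by
          have hsub := Finset.sum_le_sum_of_subset_of_nonneg
            (Finset.subset_univ ({i, j} : Finset (Fin n)))
            (fun k _ _ => abs_nonneg (d k))
          rwa [Finset.sum_pair (Ne.symm hj)] at hsub
        have hip := abs_pos.mpr hi
        have hjp := abs_pos.mpr hdj
        omega
      have hd1 : d i = 1 ∨ d i = -1 := by
        have hab := abs_le.mp hle
        have : d i ≠ 0 := hi
        omega
      have heq : d = Pi.single i (d i) := by
        funext j
        by_cases hji : j = i
        · subst hji; simp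
        · simp [Pi.single_apply, hji, hz j hji]
      rcases hd1 with h1 | h1
      · exact ⟨Sum.inl i, by rw [heq, h1]; rfl⟩
      · exact ⟨Sum.inr (Sum.inl i), by rw [heq, h1]; rfl⟩
  have ginj : Function.Injective (fun e : E => φ (vec e)) := by
    rintro (i | i | u) (j | j | v) hab <;>
      simp only [vec, Sum.elim_inl, Sum.elim_inr, key, map_zero] at hab
    · exact congrArg Sum.inl (hinj i j hab)
    · by_cases h : i = j
      · subst h; exact absurd (two_unit _ hab) (h0 _)
      · exact absurd hab (hneg i j h)
    · exact absurd hab (h0 i)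
    · by_cases h : j = i
      · subst h; exact absurd (two_unit _ hab.symm) (h0 _)
      · exact absurd hab.symm (hneg j i h)
    · exact congrArg (Sum.inr ∘ Sum.inl) (hinj i j (neg_inj.mp hab))
    · exact absurd (neg_eq_zero.mp hab) (h0 i)
    · exact absurd hab.symm (h0 j)
    · exact absurd (neg_eq_zero.mp hab.symm) (h0 j)
    · rfl
  have gsurj : Function.Surjective (fun e : E => φ (vec e)) := by
    have hcard : Fintype.card E = Fintype.card (ZMod (2 * n + 1)) := by
      simp [hE, ZMod.card]
      ring
    exact ((Fintype.bijective_iff_injective_and_card _).mpr ⟨ginj, hcard⟩).surjective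
  have hnorm : ∀ e : E, ∑ i, |vec e i| ≤ 1 := by
    rintro (i | i | u) <;>
      simp [vec, Pi.single_apply, apply_ite (fun z : ℤ => |z|), Finset.sum_ite_eq']
  intro x
  obtain ⟨e, he⟩ := gsurj (φ x)
  simp only at he
  refine ⟨x - vec e, ⟨?_, ?_⟩, ?_⟩
  · simp [Set.mem_setOf_eq, map_sub, he]
  · calc ∑ i, |x i - (x - vec e) i| = ∑ i, |vec e i| := by
          apply Finset.sum_congr rfl
          intro i _
          simp
       _ ≤ 1 := hnorm e
  · rintro y ⟨hy0, hy1⟩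
    have hdy : ∑ i, |(x - y) i| ≤ 1 := by
      refine le_trans (le_of_eq ?_) hy1
      apply Finset.sum_congr rfl
      intro i _
      simp
    obtain ⟨e', he'⟩ := classify _ hdy
    have hval : φ (vec e') = φ (vec e) := by
      rw [← he', he]
      simp [map_sub, Set.mem_setOf_eq.mp hy0]
    have hee : e' = e := ginj hval
    have : y = x - vec e' := by rw [← he']; abel
    rw [this, hee]
end

section
/- Let T ⊆ ℤ^n be a perfect Lee code of radius 1 with 0 ∈ T. Let A be the number of codewords of T equal to ±3e_i for some i (type [3^1]), and B the number of codewords of T of the form a·e_i + b·e_j with i ≠ j, {|a|,|b|} = {2,1} (type [2^1,1^1]). Then A + B = 2n. -/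
/-- Type [3^1]: one coordinate equal to ±3, the rest 0. -/
def IsType31 {n : ℕ} (W : Fin n → ℤ) : Prop :=
  ∃ i, |W i| = 3 ∧ ∀ k, k ≠ i → W k = 0

/-- Type [2^1,1^1]: one coordinate ±2, one other coordinate ±1, the rest 0. -/
def IsType2111 {n : ℕ} (W : Fin n → ℤ) : Prop :=
  ∃ i j, i ≠ j ∧ |W i| = 2 ∧ |W j| = 1 ∧ ∀ k, k ≠ i → k ≠ j → W k = 0

section Aux

variable {n : ℕ}

/-- The vector `c·eᵢ`. -/
def esing (i : Fin n) (c : ℤ) : Fin n → ℤ := fun k => if k = i then c else 0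

@[simp] lemma esing_same (i : Fin n) (c : ℤ) : esing i c i = c := by simp [esing]

lemma esing_ne {i k : Fin n} (h : k ≠ i) (c : ℤ) : esing i c k = 0 := by simp [esing, h]

lemma pair_le_sum {f : Fin n → ℤ} (hf : ∀ k, 0 ≤ f k) {i j : Fin n} (hij : i ≠ j) :
    f i + f j ≤ ∑ k, f k := by
  classical
  have h1 : ∑ k ∈ Finset.univ.erase j, f k + f j = ∑ k, f k :=
    Finset.sum_erase_add _ _ (Finset.mem_univ j)
  have h2 : f i ≤ ∑ k ∈ Finset.univ.erase j, f k :=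
    Finset.single_le_sum (fun k _ => hf k) (by simp [hij])
  linarith

lemma single_le_sum' {f : Fin n → ℤ} (hf : ∀ k, 0 ≤ f k) (i : Fin n) :
    f i ≤ ∑ k, f k :=
  Finset.single_le_sum (fun k _ => hf k) (Finset.mem_univ i)

lemma sum_single_abs {i : Fin n} {c : ℤ} {t : Fin n → ℤ} (hz : ∀ k, k ≠ i → t k = 0) :
    ∑ k, |esing i c k - t k| = |c - t i| := by
  classical
  rw [Finset.sum_eq_single_of_mem i (Finset.mem_univ i)]
  · simp
  · intro k _ hk
    simp [esing_ne hk, hz k hk]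

/-- A codeword covering `±2·eᵢ` is of type [3¹] or [2¹,1¹], and its `i`-th
coordinate equals `ε` or `(3/2)ε`. -/
lemma cover_classify {T : Set (Fin n → ℤ)} (hT : PerfectLeeCode n T) (h0 : 0 ∈ T)
    {i : Fin n} {ε : ℤ} (hε : ε = 2 ∨ ε = -2) {t : Fin n → ℤ} (ht : t ∈ T)
    (hc : ∑ k, |esing i ε k - t k| ≤ 1) :
    (IsType31 t ∨ IsType2111 t) ∧ (t i = ε ∨ 2 * t i = 3 * ε) := by
  classical
  have nonneg : ∀ k, 0 ≤ |esing i ε k - t k| := fun k => abs_nonneg _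
  by_cases hz : ∀ k, k ≠ i → t k = 0
  · have hsum : ∑ k, |esing i ε k - t k| = |ε - t i| := sum_single_abs hz
    rw [hsum] at hc
    have hc' : -1 ≤ ε - t i ∧ ε - t i ≤ 1 := abs_le.mp hc
    by_cases h3 : 2 * t i = 3 * ε
    · refine ⟨Or.inl ⟨i, ?_, hz⟩, Or.inr h3⟩
      have hti : t i = 3 ∨ t i = -3 := by rcases hε with h | h <;> subst h <;> omega
      rcases hti with h | h <;> simp [h]
    · exfalso
      -- t also covers `(ε - sign ε)·eᵢ`, which is covered by `0`, so `t = 0`;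
      -- but then `t` does not cover `ε·eᵢ`.
      set s : ℤ := ε / 2 with hs
      have hεs : ε - s = 1 ∨ ε - s = -1 := by rcases hε with h | h <;> subst h <;> simp [hs]
      have h0cov : (0 : Fin n → ℤ) ∈ T ∧ ∑ k, |esing i (ε - s) k - (0 : Fin n → ℤ) k| ≤ 1 := by
        refine ⟨h0, ?_⟩
        have heq : ∑ k, |esing i (ε - s) k - (0 : Fin n → ℤ) k| = |ε - s - (0 : Fin n → ℤ) i| :=
          sum_single_abs (fun k _ => rfl)
        rw [heq]
        rcases hεs with h | h <;> rw [show ((0 : Fin n → ℤ) i) = 0 from rfl, h] <;> simp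
      have htcov : t ∈ T ∧ ∑ k, |esing i (ε - s) k - t k| ≤ 1 := by
        refine ⟨ht, ?_⟩
        rw [sum_single_abs hz, abs_le]
        rcases hε with h | h <;> subst h <;> simp [hs] at h3 ⊢ <;> omega
      obtain ⟨u, _, hu⟩ := hT (esing i (ε - s))
      have ht0 : t = 0 := by rw [hu t htcov, hu 0 h0cov]
      have : t i = 0 := by rw [ht0]; rfl
      rcases hε with h | h <;> subst h <;> omega
  · push_neg at hz
    obtain ⟨j, hji, hj0⟩ := hz
    have termj : (1 : ℤ) ≤ |esing i ε j - t j| := by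
      rw [esing_ne hji, zero_sub, abs_neg]
      exact Int.one_le_abs hj0
    have hother : ∀ k, k ≠ j → |esing i ε k - t k| = 0 := by
      intro k hkj
      have hps := pair_le_sum nonneg hkj
      beta_reduce at hps
      have hk := nonneg k
      omega
    have hti : t i = ε := by
      have := hother i (Ne.symm hji)
      rw [esing_same, abs_eq_zero, sub_eq_zero] at this
      exact this.symm
    have hrest : ∀ k, k ≠ i → k ≠ j → t k = 0 := by
      intro k hki hkj
      have := hother k hkj
      rw [esing_ne hki, zero_sub, abs_neg, abs_eq_zero] at this
      exact this
    have htj : |t j| = 1 := by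
      have h1 := single_le_sum' nonneg j
      beta_reduce at h1
      rw [esing_ne hji, zero_sub, abs_neg] at h1 termj
      omega
    refine ⟨Or.inr ⟨i, j, Ne.symm hji, ?_, htj, hrest⟩, Or.inl hti⟩
    rw [hti]; rcases hε with h | h <;> subst h <;> simp

/-- A codeword can cover at most one point of the form `±2·eᵢ`. -/
lemma cover_unique_point {i j : Fin n} {ε ε' : ℤ} (hε : ε = 2 ∨ ε = -2)
    (hε' : ε' = 2 ∨ ε' = -2) {t : Fin n → ℤ}
    (h1 : ∑ k, |esing i ε k - t k| ≤ 1)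
    (h2 : ∑ k, |esing j ε' k - t k| ≤ 1) :
    i = j ∧ ε = ε' := by
  classical
  have tri : ∑ k, |esing i ε k - esing j ε' k| ≤ 2 := by
    have hle : ∀ k, |esing i ε k - esing j ε' k| ≤
        |esing i ε k - t k| + |esing j ε' k - t k| := by
      intro k
      calc |esing i ε k - esing j ε' k|
          = |(esing i ε k - t k) - (esing j ε' k - t k)| := by ring_nf
        _ ≤ |esing i ε k - t k| + |esing j ε' k - t k| := abs_sub _ _
    calc ∑ k, |esing i ε k - esing j ε' k|
        ≤ ∑ k, (|esing i ε k - t k| + |esing j ε' k - t k|) :=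
          Finset.sum_le_sum (fun k _ => hle k)
      _ = (∑ k, |esing i ε k - t k|) + ∑ k, |esing j ε' k - t k| :=
          Finset.sum_add_distrib
      _ ≤ 2 := by omega
  have hij : i = j := by
    by_contra hij
    have hi : |esing i ε i - esing j ε' i| = |ε| := by
      rw [esing_same, esing_ne (fun h => hij h) ε']
      simp
    have hj : |esing i ε j - esing j ε' j| = |ε'| := by
      rw [esing_same, esing_ne (Ne.symm hij) ε]
      simp [abs_sub_comm]
    have := pair_le_sum (f := fun k => |esing i ε k - esing j ε' k|)
      (fun k => abs_nonneg _) hij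
    beta_reduce at this
    rw [hi, hj] at this
    rcases hε with h | h <;> rcases hε' with h' | h' <;> subst h <;> subst h' <;>
      simp at this <;> omega
  subst hij
  refine ⟨rfl, ?_⟩
  have := single_le_sum' (f := fun k => |esing i ε k - esing i ε' k|)
    (fun k => abs_nonneg _) i
  beta_reduce at this
  simp only [esing_same] at this
  have h4 : |ε - ε'| ≤ 2 := le_trans this tri
  rcases hε with h | h <;> rcases hε' with h' | h' <;> subst h <;> subst h' <;>
    first | rfl | (exfalso; simp at h4)

/-- A codeword of type [3¹] or [2¹,1¹] covers the point `ε·eᵢ` where `i` is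
its "large" coordinate and `ε = sign(W i)·2`. -/
lemma type_covers {W : Fin n → ℤ} (h : IsType31 W ∨ IsType2111 W) :
    ∃ i ε, (ε = 2 ∨ ε = -2) ∧ ∑ k, |esing i ε k - W k| ≤ 1 := by
  classical
  rcases h with ⟨i, h3, hz⟩ | ⟨i, j, hij, h2, h1, hz⟩
  · have hW : W i = 3 ∨ W i = -3 := by
      rcases abs_cases (W i) with ⟨ha, _⟩ | ⟨ha, _⟩ <;> omega
    refine ⟨i, if W i = 3 then 2 else -2, by split <;> simp, ?_⟩
    rw [sum_single_abs hz]
    rcases hW with h | h <;> simp [h]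
  · refine ⟨i, W i, by rcases abs_cases (W i) with ⟨ha, _⟩ | ⟨ha, _⟩ <;> omega, ?_⟩
    rw [Finset.sum_eq_single_of_mem j (Finset.mem_univ j)]
    · rw [esing_ne (Ne.symm hij), zero_sub, abs_neg]
      omega
    · intro k _ hkj
      by_cases hki : k = i
      · subst hki; simp
      · simp [esing_ne hki, hz k hki hkj]

end Aux

/-- The numbers of codewords of types [3^1] and [2^1,1^1] sum to `2n`. -/
theorem count_31_2111 (n : ℕ) (T : Set (Fin n → ℤ)) (hT : PerfectLeeCode n T)
    (h0 : 0 ∈ T) :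
    {W ∈ T | IsType31 W}.ncard + {W ∈ T | IsType2111 W}.ncard = 2 * n := by
  classical
  -- the point associated to `p : Fin n × Bool`
  set pt : Fin n × Bool → (Fin n → ℤ) :=
    fun p => esing p.1 (if p.2 then 2 else -2) with hpt
  have hptε : ∀ p : Fin n × Bool, ((if p.2 then (2:ℤ) else -2) = 2 ∨
      (if p.2 then (2:ℤ) else -2) = -2) := by intro p; split <;> simp
  -- the unique codeword covering `pt p`
  set f : Fin n × Bool → (Fin n → ℤ) := fun p => (hT (pt p)).choose with hf
  have hfspec : ∀ p, (f p ∈ T ∧ ∑ k, |pt p k - f p k| ≤ 1) ∧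
      ∀ y, (y ∈ T ∧ ∑ k, |pt p k - y k| ≤ 1) → y = f p := by
    intro p
    exact ⟨(hT (pt p)).choose_spec.1, fun y hy => (hT (pt p)).choose_spec.2 y hy⟩
  -- the union of the two sets equals the range of `f`
  have hunion : {W ∈ T | IsType31 W} ∪ {W ∈ T | IsType2111 W} = Set.range f := by
    ext W
    constructor
    · intro hW
      have hWT : W ∈ T := by rcases hW with ⟨h, _⟩ | ⟨h, _⟩ <;> exact h
      have hWt : IsType31 W ∨ IsType2111 W := by
        rcases hW with ⟨_, h⟩ | ⟨_, h⟩
        exacts [Or.inl h, Or.inr h]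
      obtain ⟨i, ε, hε, hcov⟩ := type_covers hWt
      have hb : ∃ b : Bool, (if b then (2:ℤ) else -2) = ε := by
        rcases hε with h | h <;> [exact ⟨true, by simp [h]⟩; exact ⟨false, by simp [h]⟩]
      obtain ⟨b, hb⟩ := hb
      refine ⟨(i, b), ?_⟩
      have := (hfspec (i, b)).2 W ⟨hWT, by simpa [hpt, hb] using hcov⟩
      exact this.symm
    · rintro ⟨p, rfl⟩
      have hspec := (hfspec p).1
      have := cover_classify hT h0 (hptε p) hspec.1 hspec.2
      rcases this.1 with h | h
      exacts [Or.inl ⟨hspec.1, h⟩, Or.inr ⟨hspec.1, h⟩]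
  -- `f` is injective
  have hinj : Function.Injective f := by
    intro p q hpq
    have hp := (hfspec p).1.2
    have hq := (hfspec q).1.2
    rw [hpq] at hp
    have key := cover_unique_point (hptε p) (hptε q) hp hq
    have hij : p.1 = q.1 := key.1
    have hb : p.2 = q.2 := by
      have h2 := key.2
      rcases Bool.dichotomy p.2 with h | h <;> rcases Bool.dichotomy q.2 with h' | h' <;>
        simp [h, h'] at h2 ⊢
    exact Prod.ext hij hb
  -- the two sets are disjoint
  have hdisj : Disjoint {W ∈ T | IsType31 W} {W ∈ T | IsType2111 W} := by
    rw [Set.disjoint_left]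
    rintro W ⟨_, i, h3, hz⟩ ⟨_, a, b, hab, h2, _, _⟩
    by_cases hai : a = i
    · subst hai; omega
    · rw [hz a hai] at h2; simp at h2
  -- count
  have hfin : (Set.range f).Finite := Set.finite_range f
  have hfin1 : {W ∈ T | IsType31 W}.Finite :=
    hfin.subset (hunion ▸ Set.subset_union_left)
  have hfin2 : {W ∈ T | IsType2111 W}.Finite :=
    hfin.subset (hunion ▸ Set.subset_union_right)
  rw [← Set.ncard_union_eq hdisj hfin1 hfin2, hunion, ← Set.image_univ,
    Set.ncard_image_of_injective _ hinj, Set.ncard_univ]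
  simp [Nat.card_eq_fintype_card, Nat.mul_comm]
end

section
/- Let T ⊆ ℤ^n be a perfect Lee code of radius 1 with 0 ∈ T. Let B be the number of codewords of type [2^1,1^1] (one coordinate ±2, one other coordinate ±1, rest 0), and C the number of codewords of type [1^3] (exactly three coordinates equal to ±1, rest 0). Then B + 3C = 4·(n choose 2). -/
/-- Type [1^3]: exactly three coordinates equal to ±1, the rest 0. -/
def IsType13 {n : ℕ} (W : Fin n → ℤ) : Prop :=
  (∀ k, W k = 0 ∨ |W k| = 1) ∧ (Finset.univ.filter fun k => W k ≠ 0).card = 3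

namespace LeeCodeAux

open Finset
lemma abs_sub_sign (a : ℤ) (ha : a ≠ 0) : |a - a.sign| = |a| - 1 := by
  rcases lt_or_gt_of_ne ha with h | h
  · rw [Int.sign_eq_neg_one_of_neg h]
    rw [abs_of_neg h, abs_of_nonpos (by omega)]; ring
  · rw [Int.sign_eq_one_of_pos h]
    rw [abs_of_pos h, abs_of_nonneg (by omega)]

/-- decomposition: sum of abs ≤ 1 and f ≠ 0 means exactly one coordinate, of abs 1 -/
lemma exists_single {n : ℕ} {f : Fin n → ℤ} (h : ∑ i, |f i| ≤ 1) (hne : f ≠ 0) :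
    ∃ k₀, |f k₀| = 1 ∧ ∀ k, k ≠ k₀ → f k = 0 := by
  obtain ⟨k₀, hk₀⟩ := Function.ne_iff.mp hne
  simp only [Pi.zero_apply] at hk₀
  have h1 : 1 ≤ |f k₀| := by
    rcases abs_pos.mpr hk₀ with h'; omega
  have hle : |f k₀| ≤ ∑ i, |f i| :=
    Finset.single_le_sum (fun i _ => abs_nonneg (f i)) (mem_univ k₀)
  refine ⟨k₀, by omega, fun k hk => ?_⟩
  have hsplit : |f k₀| + ∑ i ∈ univ.erase k₀, |f i| = ∑ i, |f i| :=
    Finset.add_sum_erase univ (fun i => |f i|) (mem_univ k₀)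
  have hz : ∑ i ∈ univ.erase k₀, |f i| = 0 := by
    have : 0 ≤ ∑ i ∈ univ.erase k₀, |f i| :=
      Finset.sum_nonneg fun i _ => abs_nonneg _
    omega
  have := (Finset.sum_eq_zero_iff_of_nonneg (fun i _ => abs_nonneg (f i))).mp hz k
    (by simp [hk])
  exact abs_eq_zero.mp this

lemma sum_abs_of_pm {n : ℕ} {x : Fin n → ℤ} (h : ∀ k, x k = 0 ∨ |x k| = 1) :
    ∑ k, |x k| = ((univ.filter fun k => x k ≠ 0).card : ℤ) := by
  classical
  rw [← Finset.sum_filter_of_ne (s := univ) (f := fun k => |x k|)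
      (p := fun k => x k ≠ 0) (fun k _ hk => fun h0 => hk (by simp [h0]))]
  rw [Finset.card_eq_sum_ones]
  push_cast
  refine Finset.sum_congr rfl fun k hk => ?_
  rcases h k with h0 | h1
  · simp [h0] at hk
  · exact h1

def Esigns : Finset ℤ := {-1, 1}

lemma mem_Esigns {a : ℤ} : a ∈ Esigns ↔ a = -1 ∨ a = 1 := by simp [Esigns]

lemma Esigns_ne {a : ℤ} (h : a ∈ Esigns) : a ≠ 0 := by
  rcases mem_Esigns.mp h with rfl | rfl <;> norm_num

lemma Esigns_abs {a : ℤ} (h : a ∈ Esigns) : |a| = 1 := by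
  rcases mem_Esigns.mp h with rfl | rfl <;> norm_num

def pairSet (n : ℕ) : Finset (Fin n × Fin n) := univ.filter fun q => q.1 < q.2

lemma pairSet_card (n : ℕ) : (pairSet n).card = n.choose 2 := by
  classical
  have : (pairSet n).card = (Finset.powersetCard 2 (univ : Finset (Fin n))).card := by
    refine Finset.card_bij (fun q _ => ({q.1, q.2} : Finset (Fin n))) ?_ ?_ ?_
    · rintro ⟨a, b⟩ ha
      have hab : a < b := by simpa [pairSet] using ha
      simp only [Finset.mem_powersetCard]
      exact ⟨Finset.subset_univ _, Finset.card_pair hab.ne⟩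
    · rintro ⟨a, b⟩ ha ⟨c, d⟩ hc h
      have hab : a < b := by simpa [pairSet] using ha
      have hcd : c < d := by simpa [pairSet] using hc
      have h' : ({a, b} : Finset (Fin n)) = {c, d} := h
      have h1 : a = c ∨ a = d := by
        have : a ∈ ({c, d} : Finset (Fin n)) := by rw [← h']; simp
        simpa using this
      have h2 : b = c ∨ b = d := by
        have : b ∈ ({c, d} : Finset (Fin n)) := by rw [← h']; simp
        simpa using this
      have hab' : (a : ℕ) < b := hab
      have hcd' : (c : ℕ) < d := hcd
      simp only [Fin.ext_iff] at h1 h2 ⊢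
      simp only [Prod.mk.injEq, Fin.ext_iff]
      omega
    · intro s hs
      have hcard : s.card = 2 := (Finset.mem_powersetCard.mp hs).2
      obtain ⟨a, b, hab, rfl⟩ := Finset.card_eq_two.mp hcard
      rcases lt_or_gt_of_ne hab with h | h
      · exact ⟨(a, b), by simp [pairSet, h], rfl⟩
      · exact ⟨(b, a), by simp [pairSet, h], by simp [Finset.pair_comm]⟩
  rw [this, Finset.card_powersetCard, Finset.card_univ, Fintype.card_fin]

def vec {n : ℕ} (p : (Fin n × Fin n) × ℤ × ℤ) : Fin n → ℤ :=
  fun k => if k = p.1.1 then p.2.1 else if k = p.1.2 then p.2.2 else 0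

def Sfin (n : ℕ) : Finset (Fin n → ℤ) :=
  ((pairSet n) ×ˢ (Esigns ×ˢ Esigns)).image vec

lemma Sfin_card (n : ℕ) : (Sfin n).card = 4 * n.choose 2 := by
  classical
  rw [Sfin, Finset.card_image_of_injOn]
  · rw [Finset.card_product, Finset.card_product, pairSet_card]
    have : Esigns.card = 2 := by decide
    rw [this]; ring
  · rintro ⟨⟨a, b⟩, u, v⟩ hp ⟨⟨c, d⟩, u', v'⟩ hq heq
    simp only [Finset.coe_product, Set.mem_prod, Finset.mem_coe] at hp hq
    obtain ⟨hpp, hu, hv⟩ := hp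
    obtain ⟨hqq, hu', hv'⟩ := hq
    have hab : a < b := by simpa [pairSet] using hpp
    have hcd : c < d := by simpa [pairSet] using hqq
    have e1 : u = (if a = c then u' else if a = d then v' else 0) := by
      have := congrFun heq a; simpa [vec] using this
    have e2 : v = (if b = c then u' else if b = d then v' else 0) := by
      have := congrFun heq b; simpa [vec, hab.ne'] using this
    have e3 : (if c = a then u else if c = b then v else 0) = u' := by
      have := congrFun heq c; simpa [vec] using this
    have hac : a = c := by
      by_contra hac
      rcases eq_or_ne a d with had | had
      · have hca : ¬ c = a := fun h => hac h.symm
        have hcb : ¬ c = b := by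
          intro h
          have : (c : ℕ) < a := had ▸ hcd
          have : (a : ℕ) < b := hab
          have : (c : ℕ) = b := by exact_mod_cast congrArg Fin.val h
          omega
        rw [if_neg hca, if_neg hcb] at e3
        exact Esigns_ne hu' e3.symm
      · rw [if_neg hac, if_neg had] at e1
        exact Esigns_ne hu e1
    subst hac
    have hbd : b = d := by
      by_contra hbd
      have hbc : ¬ b = a := hab.ne'
      rw [if_neg hbc, if_neg hbd] at e2
      exact Esigns_ne hv e2
    subst hbd
    rw [if_pos rfl] at e1
    rw [if_neg hab.ne', if_pos rfl] at e2
    subst e1; subst e2; rfl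

lemma mem_Sfin {n : ℕ} {x : Fin n → ℤ} :
    x ∈ Sfin n ↔ (∀ k, x k = 0 ∨ |x k| = 1) ∧
      (univ.filter fun k => x k ≠ 0).card = 2 := by
  classical
  constructor
  · intro hx
    obtain ⟨⟨⟨a, b⟩, u, v⟩, hp, rfl⟩ := Finset.mem_image.mp hx
    simp only [Finset.mem_product] at hp
    obtain ⟨hpp, hu, hv⟩ := hp
    have hab : a < b := by simpa [pairSet] using hpp
    constructor
    · intro k
      by_cases h1 : k = a
      · right; simp [vec, h1, Esigns_abs hu]
      · by_cases h2 : k = b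
        · right; simp [vec, h1, h2, hab.ne', Esigns_abs hv]
        · left; simp [vec, h1, h2]
    · have : (univ.filter fun k => vec ((a, b), u, v) k ≠ 0) = {a, b} := by
        ext k
        simp only [Finset.mem_filter, Finset.mem_univ, true_and, Finset.mem_insert,
          Finset.mem_singleton]
        by_cases h1 : k = a
        · simp [vec, h1, Esigns_ne hu]
        · by_cases h2 : k = b
          · simp [vec, h1, h2, hab.ne', Esigns_ne hv]
          · simp [vec, h1, h2]
      rw [this, Finset.card_pair hab.ne]
  · rintro ⟨hpm, hcard⟩
    obtain ⟨a, b, hab, hset⟩ := Finset.card_eq_two.mp hcard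
    have ha' : x a ≠ 0 := by
      have : a ∈ univ.filter fun k => x k ≠ 0 := by rw [hset]; simp
      simpa using this
    have hb' : x b ≠ 0 := by
      have : b ∈ univ.filter fun k => x k ≠ 0 := by rw [hset]; simp
      simpa using this
    have hmem : ∀ k, x k ≠ 0 ↔ (k = a ∨ k = b) := by
      intro k
      constructor
      · intro hk
        have : k ∈ ({a, b} : Finset (Fin n)) := by rw [← hset]; simp [hk]
        simpa using this
      · intro hk
        rcases hk with h | h
        · rw [h]; exact ha'
        · rw [h]; exact hb'
    have hEs : ∀ k, x k ≠ 0 → x k ∈ Esigns := by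
      intro k hk
      rcases hpm k with h0 | h1
      · exact absurd h0 hk
      · rw [mem_Esigns]
        rcases (abs_eq (by norm_num : (0:ℤ) ≤ 1)).mp h1 with h | h
        · right; exact h
        · left; exact h
    have key : ∀ (a b : Fin n), a < b → (∀ k, x k ≠ 0 ↔ (k = a ∨ k = b)) →
        x ∈ Sfin n := by
      intro a b hab hmem
      have hxa : x a ∈ Esigns := hEs a ((hmem a).mpr (Or.inl rfl))
      have hxb : x b ∈ Esigns := hEs b ((hmem b).mpr (Or.inr rfl))
      refine Finset.mem_image.mpr ⟨((a, b), x a, x b), ?_, ?_⟩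
      · simp only [Finset.mem_product]
        exact ⟨by simp [pairSet, hab], hxa, hxb⟩
      · funext k
        by_cases h1 : k = a
        · simp [vec, h1]
        · by_cases h2 : k = b
          · simp [vec, h1, h2, hab.ne']
          · have hk0 : x k = 0 := by
              by_contra hk
              rcases (hmem k).mp hk with h | h <;> tauto
            simp only [vec]
            rw [if_neg h1, if_neg h2, hk0]
    rcases lt_or_gt_of_ne hab with h | h
    · exact key a b h hmem
    · exact key b a h (fun k => by rw [hmem k]; tauto)


lemma minweight {n : ℕ} {T : Set (Fin n → ℤ)} (hT : PerfectLeeCode n T)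
    (h0 : 0 ∈ T) {t : Fin n → ℤ} (ht : t ∈ T) (htne : t ≠ 0) : 3 ≤ ∑ i, |t i| := by
  by_contra hlt
  push_neg at hlt
  have hnn : (0:ℤ) ≤ ∑ i, |t i| := Finset.sum_nonneg fun i _ => abs_nonneg _
  rcases le_or_gt (∑ i, |t i|) 1 with h1 | h2
  · refine htne ((hT 0).unique ⟨ht, ?_⟩ ⟨h0, by simp⟩)
    simpa [zero_sub, abs_neg] using h1
  · have hsum2 : ∑ i, |t i| = 2 := by omega
    obtain ⟨i, hi⟩ : ∃ i, t i ≠ 0 := by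
      by_contra h
      push_neg at h
      exact htne (funext fun k => h k)
    set x : Fin n → ℤ := Function.update t i (t i - (t i).sign) with hxdef
    have hagree : ∀ k, k ≠ i → x k = t k := fun k hk => Function.update_of_ne hk _ _
    have hxi : x i = t i - (t i).sign := Function.update_self _ _ _
    have hsign : |(t i).sign| = 1 := by
      rcases lt_or_gt_of_ne hi with h | h
      · rw [Int.sign_eq_neg_one_of_neg h]; norm_num
      · rw [Int.sign_eq_one_of_pos h]; norm_num
    have hdist_t : ∑ k, |x k - t k| = 1 := by
      rw [Finset.sum_eq_single_of_mem i (Finset.mem_univ i)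
        (fun k _ hk => by rw [hagree k hk, sub_self, abs_zero])]
      rw [hxi]
      simpa using hsign
    have hdist_0 : ∑ k, |x k - 0| = 1 := by
      simp only [sub_zero]
      have e1 : |x i| + ∑ k ∈ univ.erase i, |x k| = ∑ k, |x k| :=
        Finset.add_sum_erase univ (fun k => |x k|) (Finset.mem_univ i)
      have e2 : |t i| + ∑ k ∈ univ.erase i, |t k| = ∑ k, |t k| :=
        Finset.add_sum_erase univ (fun k => |t k|) (Finset.mem_univ i)
      have e3 : ∑ k ∈ univ.erase i, |x k| = ∑ k ∈ univ.erase i, |t k| :=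
        Finset.sum_congr rfl fun k hk => by
          rw [hagree k (Finset.ne_of_mem_erase hk)]
      have e4 : |x i| = |t i| - 1 := by rw [hxi]; exact abs_sub_sign _ hi
      omega
    have : t = 0 := (hT x).unique ⟨ht, le_of_eq hdist_t⟩ ⟨h0, le_of_eq hdist_0⟩
    exact htne this

lemma classify {n : ℕ} {T : Set (Fin n → ℤ)} (hT : PerfectLeeCode n T)
    (h0 : 0 ∈ T) {x t : Fin n → ℤ} (hx : x ∈ Sfin n) (ht : t ∈ T)
    (hd : ∑ k, |x k - t k| ≤ 1) : IsType2111 t ∨ IsType13 t := by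
  classical
  obtain ⟨hpm, hcard⟩ := mem_Sfin.mp hx
  have hx2 : ∑ k, |x k| = 2 := by rw [sum_abs_of_pm hpm, hcard]; norm_num
  have htne : t ≠ 0 := by
    rintro rfl
    simp only [Pi.zero_apply, sub_zero] at hd
    omega
  have h3 : 3 ≤ ∑ k, |t k| := minweight hT h0 ht htne
  have htri : ∑ k, |t k| ≤ ∑ k, |x k| + ∑ k, |x k - t k| := by
    rw [← Finset.sum_add_distrib]
    refine Finset.sum_le_sum fun k _ => ?_
    have : t k = x k - (x k - t k) := by ring
    calc |t k| = |x k - (x k - t k)| := by rw [← this]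
      _ ≤ |x k| + |x k - t k| := abs_sub _ _
  have hsum3 : ∑ k, |t k| = 3 := by omega
  have hne : (fun k => x k - t k) ≠ 0 := by
    intro h
    have : x = t := funext fun k => by
      have := congrFun h k
      simp only [Pi.zero_apply] at this
      omega
    rw [this] at hx2
    omega
  obtain ⟨k₀, hk1, hk2⟩ := exists_single hd hne
  have hk2' : ∀ k, k ≠ k₀ → x k = t k := fun k hk => by
    have := hk2 k hk; omega
  have key : |t k₀| = |x k₀| + 1 := by
    have e1 : |t k₀| + ∑ k ∈ univ.erase k₀, |t k| = ∑ k, |t k| :=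
      Finset.add_sum_erase univ (fun k => |t k|) (Finset.mem_univ k₀)
    have e2 : |x k₀| + ∑ k ∈ univ.erase k₀, |x k| = ∑ k, |x k| :=
      Finset.add_sum_erase univ (fun k => |x k|) (Finset.mem_univ k₀)
    have e3 : ∑ k ∈ univ.erase k₀, |x k| = ∑ k ∈ univ.erase k₀, |t k| :=
      Finset.sum_congr rfl fun k hk => by rw [hk2' k (Finset.ne_of_mem_erase hk)]
    omega
  rcases hpm k₀ with hz | ho
  · -- x k₀ = 0 : type [1^3]
    right
    have htk : |t k₀| = 1 := by rw [hz] at key; simpa using key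
    refine ⟨fun k => ?_, ?_⟩
    · by_cases hk : k = k₀
      · right; rw [hk]; exact htk
      · rw [← hk2' k hk]; exact hpm k
    · have hfe : (univ.filter fun k => t k ≠ 0) =
          insert k₀ (univ.filter fun k => x k ≠ 0) := by
        ext k
        simp only [Finset.mem_filter, Finset.mem_univ, true_and, Finset.mem_insert]
        by_cases hk : k = k₀
        · subst hk
          simp only [true_or, iff_true]
          intro h
          rw [h] at htk
          simp at htk
        · rw [← hk2' k hk]
          simp [hk]
      rw [hfe, Finset.card_insert_of_notMem (by simp [hz]), hcard]
  · -- |x k₀| = 1 : type [2^1 1^1]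
    left
    have htk : |t k₀| = 2 := by omega
    have hk₀mem : k₀ ∈ univ.filter fun k => x k ≠ 0 := by
      simp only [Finset.mem_filter, Finset.mem_univ, true_and]
      intro h; rw [h] at ho; simp at ho
    have hcard_erase : ((univ.filter fun k => x k ≠ 0).erase k₀).card = 1 := by
      rw [Finset.card_erase_of_mem hk₀mem, hcard]
    obtain ⟨j, hj⟩ := Finset.card_eq_one.mp hcard_erase
    have hjmem : j ∈ (univ.filter fun k => x k ≠ 0).erase k₀ := by rw [hj]; simp
    have hjne : j ≠ k₀ := (Finset.mem_erase.mp hjmem).1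
    have hjx : x j ≠ 0 := by
      have := (Finset.mem_erase.mp hjmem).2
      simpa using this
    refine ⟨k₀, j, hjne.symm, htk, ?_, ?_⟩
    · rw [← hk2' j hjne]
      rcases hpm j with h | h
      · exact absurd h hjx
      · exact h
    · intro k hk1' hk2''
      rw [← hk2' k hk1']
      by_contra hne'
      have : k ∈ (univ.filter fun k => x k ≠ 0).erase k₀ := by
        simp [Finset.mem_erase, hk1', hne']
      rw [hj] at this
      simp only [Finset.mem_singleton] at this
      exact hk2'' this

lemma fiber2111 {n : ℕ} {t : Fin n → ℤ} (ht2 : IsType2111 t) :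
    ((Sfin n).filter fun x => ∑ k, |x k - t k| ≤ 1).card = 1 := by
  classical
  obtain ⟨i, j, hij, h2, h1, hz⟩ := ht2
  have hti : t i = 2 ∨ t i = -2 := by
    rcases (abs_eq (by norm_num : (0:ℤ) ≤ 2)).mp h2 with h | h
    · exact Or.inl h
    · exact Or.inr h
  have htj : t j ≠ 0 := by intro h; rw [h] at h1; simp at h1
  set x₀ : Fin n → ℤ := Function.update t i (t i / 2) with hx₀def
  have hx₀i : x₀ i = t i / 2 := Function.update_self _ _ _
  have hx₀k : ∀ k, k ≠ i → x₀ k = t k := fun k hk => Function.update_of_ne hk _ _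
  have habs_i : |x₀ i| = 1 := by rw [hx₀i]; rcases hti with h | h <;> rw [h] <;> norm_num
  have hdiff_i : |x₀ i - t i| = 1 := by
    rw [hx₀i]; rcases hti with h | h <;> rw [h] <;> norm_num
  have hx₀S : x₀ ∈ Sfin n := by
    rw [mem_Sfin]
    constructor
    · intro k
      by_cases hk : k = i
      · right; rw [hk]; exact habs_i
      · rw [hx₀k k hk]
        by_cases hk2 : k = j
        · right; rw [hk2]; exact h1
        · left; exact hz k hk hk2
    · have : (univ.filter fun k => x₀ k ≠ 0) = {i, j} := by
        ext k
        simp only [Finset.mem_filter, Finset.mem_univ, true_and, Finset.mem_insert,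
          Finset.mem_singleton]
        by_cases hk : k = i
        · subst hk
          simp only [true_or, iff_true]
          intro h; rw [h] at habs_i; simp at habs_i
        · rw [hx₀k k hk]
          by_cases hk2 : k = j
          · simp [hk, hk2, htj]
          · simp [hk, hk2, hz k hk hk2]
      rw [this, Finset.card_pair hij]
  have hx₀d : ∑ k, |x₀ k - t k| ≤ 1 := by
    rw [Finset.sum_eq_single_of_mem i (Finset.mem_univ i)
      (fun k _ hk => by rw [hx₀k k hk, sub_self, abs_zero])]
    rw [hdiff_i]
  rw [Finset.card_eq_one]
  refine ⟨x₀, ?_⟩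
  ext x
  simp only [Finset.mem_filter, Finset.mem_singleton]
  constructor
  · rintro ⟨hxS, hxd⟩
    obtain ⟨hpm, hcard⟩ := mem_Sfin.mp hxS
    have hxi_le : |x i| ≤ 1 := by
      rcases hpm i with h | h
      · rw [h]; norm_num
      · rw [h]
    have hterm_ge : 1 ≤ |x i - t i| := by
      have h' := abs_le.mp hxi_le
      rcases hti with h | h <;> rw [h, le_abs] <;> omega
    have hle_sum : |x i - t i| ≤ ∑ k, |x k - t k| :=
      Finset.single_le_sum (f := fun k => |x k - t k|)
        (fun k _ => abs_nonneg _) (Finset.mem_univ i)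
    have hterm_le : |x i - t i| ≤ 1 := le_trans hle_sum hxd
    have hxi_eq : x i = t i / 2 := by
      have hd1 := abs_le.mp hterm_le
      have hd2 := abs_le.mp hxi_le
      rcases hti with h | h <;> rw [h] at hd1 ⊢ <;> norm_num <;> omega
    have hzero : ∀ k, k ≠ i → x k = t k := by
      have hsplit : |x i - t i| + ∑ k ∈ univ.erase i, |x k - t k| = ∑ k, |x k - t k| :=
        Finset.add_sum_erase univ (fun k => |x k - t k|) (Finset.mem_univ i)
      have hge : (0:ℤ) ≤ ∑ k ∈ univ.erase i, |x k - t k| :=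
        Finset.sum_nonneg fun k _ => abs_nonneg _
      have h0 : ∑ k ∈ univ.erase i, |x k - t k| = 0 := by omega
      intro k hk
      have := (Finset.sum_eq_zero_iff_of_nonneg
        (fun k _ => abs_nonneg (x k - t k))).mp h0 k (by simp [hk])
      have := abs_eq_zero.mp this
      omega
    funext k
    by_cases hk : k = i
    · rw [hk, hx₀i, hxi_eq]
    · rw [hx₀k k hk]; exact hzero k hk
  · rintro rfl
    exact ⟨hx₀S, hx₀d⟩

lemma fiber13 {n : ℕ} {t : Fin n → ℤ} (ht3 : IsType13 t) :
    ((Sfin n).filter fun x => ∑ k, |x k - t k| ≤ 1).card = 3 := by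
  classical
  obtain ⟨hpm3, hcard3⟩ := ht3
  have hsum3 : ∑ k, |t k| = 3 := by rw [sum_abs_of_pm hpm3, hcard3]; norm_num
  have himg : ((Sfin n).filter fun x => ∑ k, |x k - t k| ≤ 1) =
      (univ.filter fun k => t k ≠ 0).image fun a => Function.update t a 0 := by
    ext x
    simp only [Finset.mem_filter, Finset.mem_image, Finset.mem_univ, true_and]
    constructor
    · rintro ⟨hxS, hxd⟩
      obtain ⟨hpm, hcard⟩ := mem_Sfin.mp hxS
      have hx2 : ∑ k, |x k| = 2 := by rw [sum_abs_of_pm hpm, hcard]; norm_num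
      have hne : (fun k => x k - t k) ≠ 0 := by
        intro h
        have : x = t := funext fun k => by
          have := congrFun h k
          simp only [Pi.zero_apply] at this
          omega
        rw [this] at hx2
        omega
      obtain ⟨k₀, hk1, hk2⟩ := exists_single hxd hne
      have hk2' : ∀ k, k ≠ k₀ → x k = t k := fun k hk => by
        have := hk2 k hk; omega
      have key : |t k₀| = |x k₀| + 1 := by
        have e1 : |t k₀| + ∑ k ∈ univ.erase k₀, |t k| = ∑ k, |t k| :=
          Finset.add_sum_erase univ (fun k => |t k|) (Finset.mem_univ k₀)
        have e2 : |x k₀| + ∑ k ∈ univ.erase k₀, |x k| = ∑ k, |x k| :=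
          Finset.add_sum_erase univ (fun k => |x k|) (Finset.mem_univ k₀)
        have e3 : ∑ k ∈ univ.erase k₀, |x k| = ∑ k ∈ univ.erase k₀, |t k| :=
          Finset.sum_congr rfl fun k hk => by rw [hk2' k (Finset.ne_of_mem_erase hk)]
        omega
      have hxk0 : x k₀ = 0 := by
        rcases hpm3 k₀ with h | h
        · rw [h] at key; simp at key
          have := abs_nonneg (x k₀); omega
        · rw [h] at key
          have : |x k₀| = 0 := by omega
          exact abs_eq_zero.mp this
      have htk0 : t k₀ ≠ 0 := by
        intro h; rw [h, hxk0] at key; simp at key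
      refine ⟨k₀, htk0, ?_⟩
      funext k
      by_cases hk : k = k₀
      · rw [hk, Function.update_self, hxk0]
      · rw [Function.update_of_ne hk, ← hk2' k hk]
    · rintro ⟨a, ha, rfl⟩
      have hta : |t a| = 1 := by
        rcases hpm3 a with h | h
        · exact absurd h ha
        · exact h
      constructor
      · rw [mem_Sfin]
        constructor
        · intro k
          by_cases hk : k = a
          · left; subst hk; simp
          · rw [Function.update_of_ne hk]; exact hpm3 k
        · have : (univ.filter fun k => Function.update t a 0 k ≠ 0) =
              (univ.filter fun k => t k ≠ 0).erase a := by
            ext k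
            simp only [Finset.mem_filter, Finset.mem_univ, true_and, Finset.mem_erase]
            by_cases hk : k = a
            · subst hk; simp
            · simp [Function.update_of_ne hk, hk]
          rw [this, Finset.card_erase_of_mem (by simp [ha]), hcard3]
      · rw [Finset.sum_eq_single_of_mem a (Finset.mem_univ a)
          (fun k _ hk => by rw [Function.update_of_ne hk, sub_self, abs_zero])]
        rw [Function.update_self]
        simpa using le_of_eq hta
  rw [himg, Finset.card_image_of_injOn, hcard3]
  intro a ha b hb hab
  by_contra hne
  have := congrFun hab a
  simp only at this
  rw [Function.update_self, Function.update_of_ne hne] at this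
  simp only [Finset.coe_filter, Set.mem_setOf_eq] at ha
  exact ha.2 this.symm

end LeeCodeAux

/-- `B + 3C = 4·(n choose 2)` where `B`, `C` count codewords of
types [2^1,1^1] and [1^3]. -/
theorem count_2111_13 (n : ℕ) (T : Set (Fin n → ℤ)) (hT : PerfectLeeCode n T)
    (h0 : 0 ∈ T) :
    {W ∈ T | IsType2111 W}.ncard + 3 * {W ∈ T | IsType13 W}.ncard =
      4 * n.choose 2 := by
  classical
  choose cw hcw using fun x => (hT x).exists
  have huniq : ∀ {x t : Fin n → ℤ}, t ∈ T → (∑ i, |x i - t i| ≤ 1) → cw x = t :=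
    fun {x t} h1 h2 => (hT x).unique (hcw x) ⟨h1, h2⟩
  set Bfin : Finset (Fin n → ℤ) :=
    ((LeeCodeAux.Sfin n).image cw).filter (fun t => IsType2111 t) with hBdef
  set Cfin : Finset (Fin n → ℤ) :=
    ((LeeCodeAux.Sfin n).image cw).filter (fun t => IsType13 t) with hCdef
  have hBT : ∀ t ∈ Bfin, t ∈ T := by
    intro t ht
    obtain ⟨x, _, rfl⟩ := Finset.mem_image.mp (Finset.mem_filter.mp ht).1
    exact (hcw x).1
  have hCT : ∀ t ∈ Cfin, t ∈ T := by
    intro t ht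
    obtain ⟨x, _, rfl⟩ := Finset.mem_image.mp (Finset.mem_filter.mp ht).1
    exact (hcw x).1
  have hBset : {W ∈ T | IsType2111 W} = ↑Bfin := by
    ext W
    rw [Finset.mem_coe, hBdef]
    simp only [Set.mem_setOf_eq, Finset.mem_filter, Finset.mem_image]
    constructor
    · rintro ⟨hWT, hW2⟩
      refine ⟨?_, hW2⟩
      have hpos : 0 < ((LeeCodeAux.Sfin n).filter fun x => ∑ k, |x k - W k| ≤ 1).card := by
        rw [LeeCodeAux.fiber2111 hW2]; norm_num
      obtain ⟨x, hx⟩ := Finset.card_pos.mp hpos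
      obtain ⟨hxS, hxd⟩ := Finset.mem_filter.mp hx
      exact ⟨x, hxS, huniq hWT hxd⟩
    · rintro ⟨⟨x, hxS, rfl⟩, hW2⟩
      exact ⟨(hcw x).1, hW2⟩
  have hCset : {W ∈ T | IsType13 W} = ↑Cfin := by
    ext W
    rw [Finset.mem_coe, hCdef]
    simp only [Set.mem_setOf_eq, Finset.mem_filter, Finset.mem_image]
    constructor
    · rintro ⟨hWT, hW3⟩
      refine ⟨?_, hW3⟩
      have hpos : 0 < ((LeeCodeAux.Sfin n).filter fun x => ∑ k, |x k - W k| ≤ 1).card := by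
        rw [LeeCodeAux.fiber13 hW3]; norm_num
      obtain ⟨x, hx⟩ := Finset.card_pos.mp hpos
      obtain ⟨hxS, hxd⟩ := Finset.mem_filter.mp hx
      exact ⟨x, hxS, huniq hWT hxd⟩
    · rintro ⟨⟨x, hxS, rfl⟩, hW3⟩
      exact ⟨(hcw x).1, hW3⟩
  have hmaps : ∀ x ∈ LeeCodeAux.Sfin n, cw x ∈ Bfin ∪ Cfin := by
    intro x hx
    have himg : cw x ∈ (LeeCodeAux.Sfin n).image cw := Finset.mem_image_of_mem cw hx
    rcases LeeCodeAux.classify hT h0 hx (hcw x).1 (hcw x).2 with h | h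
    · exact Finset.mem_union_left _ (Finset.mem_filter.mpr ⟨himg, h⟩)
    · exact Finset.mem_union_right _ (Finset.mem_filter.mpr ⟨himg, h⟩)
  have hfiber_eq : ∀ t ∈ T, ((LeeCodeAux.Sfin n).filter fun x => cw x = t) =
      ((LeeCodeAux.Sfin n).filter fun x => ∑ k, |x k - t k| ≤ 1) := by
    intro t ht
    refine Finset.filter_congr fun x _ => ?_
    constructor
    · rintro rfl; exact (hcw x).2
    · intro h; exact huniq ht h
  have hdisj : Disjoint Bfin Cfin := by
    rw [Finset.disjoint_left]
    intro t htB htC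
    obtain ⟨i, j, hij, h2, _, _⟩ := (Finset.mem_filter.mp htB).2
    obtain ⟨hpm, _⟩ := (Finset.mem_filter.mp htC).2
    rcases hpm i with h | h
    · rw [h] at h2; simp at h2
    · rw [h] at h2; norm_num at h2
  have hcount : (LeeCodeAux.Sfin n).card = Bfin.card + 3 * Cfin.card := by
    rw [Finset.card_eq_sum_card_fiberwise hmaps, Finset.sum_union hdisj]
    have hB : ∑ t ∈ Bfin, ((LeeCodeAux.Sfin n).filter fun x => cw x = t).card =
        Bfin.card := by
      rw [Finset.card_eq_sum_ones Bfin]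
      refine Finset.sum_congr rfl fun t ht => ?_
      rw [hfiber_eq t (hBT t ht), LeeCodeAux.fiber2111 (Finset.mem_filter.mp ht).2]
    have hC : ∑ t ∈ Cfin, ((LeeCodeAux.Sfin n).filter fun x => cw x = t).card =
        3 * Cfin.card := by
      have heq : ∑ t ∈ Cfin, ((LeeCodeAux.Sfin n).filter fun x => cw x = t).card =
          ∑ _t ∈ Cfin, 3 :=
        Finset.sum_congr rfl fun t ht => by
          rw [hfiber_eq t (hCT t ht), LeeCodeAux.fiber13 (Finset.mem_filter.mp ht).2]
      rw [heq, Finset.sum_const, smul_eq_mul, mul_comm]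
    rw [hB, hC]
  rw [hBset, hCset, Set.ncard_coe_finset, Set.ncard_coe_finset,
    ← LeeCodeAux.Sfin_card n, hcount]
end

section
/- Let T ⊆ ℤ^n be a perfect Lee code of radius 1 with 0 ∈ T, and suppose that (i) for every W ∈ T the translated set {V - W : V ∈ T, |V - W|_M ≤ 3} equals {V : V ∈ T, |V|_M ≤ 3}, and (ii) the set N = {V ∈ T : |V|_M ≤ 3} is symmetric (V ∈ N implies -V ∈ N). Suppose further that for every Z ∈ T there is a chain 0 = Z_0, Z_1, ..., Z_m = Z in T with consecutive Manhattan distances equal to 3. Then T is a subgroup of ℤ^n. -/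
/-- If the 3-neighborhood of every codeword, translated to the origin, equals the
3-neighborhood of the origin, this neighborhood is symmetric, and every codeword
is reachable from the origin by a chain of codewords with consecutive Manhattan
distances 3, then the code is a subgroup of `ℤ^n`. -/
theorem code_is_lattice (n : ℕ) (T : Set (Fin n → ℤ)) (hT : PerfectLeeCode n T)
    (h0 : 0 ∈ T)
    (hnbhd : ∀ W ∈ T,
      {x : Fin n → ℤ | ∃ V ∈ T, (∑ i, |V i - W i| ≤ 3) ∧ x = V - W} =
      {V : Fin n → ℤ | V ∈ T ∧ ∑ i, |V i| ≤ 3})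
    (hsymm : ∀ V ∈ T, (∑ i, |V i| ≤ 3) → -V ∈ T)
    (hchain : ∀ Z ∈ T, ∃ (m : ℕ) (c : ℕ → Fin n → ℤ),
      c 0 = 0 ∧ c m = Z ∧ (∀ k ≤ m, c k ∈ T) ∧
      ∀ k < m, ∑ i, |c (k + 1) i - c k i| = 3) :
    ∃ H : AddSubgroup (Fin n → ℤ), (H : Set (Fin n → ℤ)) = T := by
  -- small-addition: adding a codeword of norm ≤ 3 to any codeword stays in T
  have hadd : ∀ W ∈ T, ∀ V ∈ T, (∑ i, |V i| ≤ 3) → V + W ∈ T := by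
    intro W hW V hV hVn
    have h := hnbhd W hW
    have hmem : V ∈ {V : Fin n → ℤ | V ∈ T ∧ ∑ i, |V i| ≤ 3} := ⟨hV, hVn⟩
    rw [← h] at hmem
    obtain ⟨V', hV', _, hEq⟩ := hmem
    have : V + W = V' := by rw [hEq]; abel
    rw [this]; exact hV'
  -- chain step differences are codewords of norm ≤ 3
  have hstep : ∀ A ∈ T, ∀ B ∈ T, (∑ i, |B i - A i| ≤ 3) →
      (B - A ∈ T ∧ ∑ i, |(B - A) i| ≤ 3) := by
    intro A hA B hB hd
    have h := hnbhd A hA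
    have hmem : B - A ∈ {x : Fin n → ℤ | ∃ V ∈ T, (∑ i, |V i - A i| ≤ 3) ∧ x = V - A} :=
      ⟨B, hB, hd, rfl⟩
    rw [h] at hmem
    exact hmem
  -- closure under addition
  have haddT : ∀ Z ∈ T, ∀ W ∈ T, Z + W ∈ T := by
    intro Z hZ W hW
    obtain ⟨m, c, hc0, hcm, hcT, hcd⟩ := hchain Z hZ
    have key : ∀ k ≤ m, c k + W ∈ T := by
      intro k hk
      induction k with
      | zero => simpa [hc0] using hW
      | succ k ih =>
        have hk' : k ≤ m := Nat.le_of_succ_le hk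
        have hklt : k < m := hk
        have hd := hcd k hklt
        obtain ⟨hdT, hdn⟩ := hstep (c k) (hcT k hk') (c (k+1)) (hcT (k+1) hk) (le_of_eq hd)
        have := hadd (c k + W) (ih hk') (c (k+1) - c k) hdT hdn
        have heq : c (k+1) - c k + (c k + W) = c (k+1) + W := by abel
        rwa [heq] at this
    have := key m le_rfl
    rwa [hcm] at this
  -- closure under negation
  have hnegT : ∀ Z ∈ T, -Z ∈ T := by
    intro Z hZ
    obtain ⟨m, c, hc0, hcm, hcT, hcd⟩ := hchain Z hZ
    have key : ∀ k ≤ m, -c k ∈ T := by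
      intro k hk
      induction k with
      | zero => simpa [hc0] using h0
      | succ k ih =>
        have hk' : k ≤ m := Nat.le_of_succ_le hk
        have hklt : k < m := hk
        have hd := hcd k hklt
        obtain ⟨hdT, hdn⟩ := hstep (c k) (hcT k hk') (c (k+1)) (hcT (k+1) hk) (le_of_eq hd)
        have hneg : -(c (k+1) - c k) ∈ T := hsymm _ hdT hdn
        have hnegn : ∑ i, |(-(c (k+1) - c k)) i| ≤ 3 := by
          simpa [abs_sub_comm] using hdn
        have := hadd (-c k) (ih hk') (-(c (k+1) - c k)) hneg hnegn
        have heq : -(c (k+1) - c k) + -c k = -c (k+1) := by abel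
        rwa [heq] at this
    have := key m le_rfl
    rwa [hcm] at this
  exact ⟨{ carrier := T
           zero_mem' := h0
           add_mem' := fun {a b} ha hb => haddT a ha b hb
           neg_mem' := fun {a} ha => hnegT a ha }, rfl⟩
end
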